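/- A guaranteed scoring game G with Ls(G) < Rs(G) is not invertible: there is no guaranteed H with G + H ∼ 0. -/

import Mathlib

/-!
Suppose `G + H ∼ 0` and fix `n` exceeding the total birthday of `G` and `H`. In
`G + H - n̂` Right holds `n` waiting moves; answering Left's moves locally and passing
whenever the relevant component offers no move, Right shows `Ls (G + H - n̂) ≤ Ls G + Ls H`.
Passing costs nothing because a guaranteed game in which one player has no option
satisfies `Ls ≤ Rs`. Dually, Left with `n` waiting moves achieves
`Rs G + Ls H ≤ Ls (G + H + n̂)`. Both `±n̂` have Left-stop `0`, so `G + H ∼ 0` yields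
`0 ≤ Ls G + Ls H` and `Rs G + Ls H ≤ 0`, whence `Rs G ≤ Ls G`.
-/

/-- A scoring game: `la`/`ra` are the atom values (relevant when the
corresponding option list is empty), `L`/`R` the Left and Right options. -/
inductive SG : Type
  | mk (la ra : ℝ) (L R : List SG) : SG

namespace SG

theorem sizeOf_lt_of_mem {g : SG} {l : List SG} (h : g ∈ l) : sizeOf g < sizeOf l :=
  List.sizeOf_lt_of_mem h

noncomputable instance : DecidableEq SG := Classical.decEq _

def la : SG → ℝ | mk a _ _ _ => a
def ra : SG → ℝ | mk _ b _ _ => b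
def L : SG → List SG | mk _ _ l _ => l
def R : SG → List SG | mk _ _ _ r => r

/-- The list of atom values occurring in atomic followers of a game. -/
def atomList : SG → List ℝ
  | mk a b ls rs =>
    (if ls.isEmpty then [a] else (ls.attach.map (fun x => atomList x.1)).flatten)
    ++ (if rs.isEmpty then [b] else (rs.attach.map (fun x => atomList x.1)).flatten)
decreasing_by all_goals (simp only [SG.mk.sizeOf_spec]; (first | (have := sizeOf_lt_of_mem x.2) | (have := sizeOf_lt_of_mem (by assumption : x ∈ _))); omega)

/-- The guaranteed condition. -/
def Guaranteed : SG → Prop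
  | mk a b ls rs =>
    (∀ x ∈ ls, Guaranteed x) ∧ (∀ x ∈ rs, Guaranteed x) ∧
    (ls = [] → ∀ s ∈ (mk a b ls rs).atomList, a ≤ s) ∧
    (rs = [] → ∀ s ∈ (mk a b ls rs).atomList, s ≤ b)
decreasing_by all_goals (simp only [SG.mk.sizeOf_spec]; (first | (have := sizeOf_lt_of_mem x.2) | (have := sizeOf_lt_of_mem (by assumption : x ∈ _))); omega)

/-- Disjunctive sum. -/
noncomputable def add : SG → SG → SG
  | mk a1 b1 L1 R1, mk a2 b2 L2 R2 =>
    mk (a1 + a2) (b1 + b2)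
      (L1.attach.map (fun x => add x.1 (mk a2 b2 L2 R2))
        ++ L2.attach.map (fun x => add (mk a1 b1 L1 R1) x.1))
      (R1.attach.map (fun x => add x.1 (mk a2 b2 L2 R2))
        ++ R2.attach.map (fun x => add (mk a1 b1 L1 R1) x.1))
termination_by g h => sizeOf g + sizeOf h
decreasing_by all_goals (simp only [SG.mk.sizeOf_spec]; (first | (have := sizeOf_lt_of_mem x.2) | (have := sizeOf_lt_of_mem (by assumption : x ∈ _))); omega)

/-- Left- and Right-stops (as a pair). -/
noncomputable def stops : SG → ℝ × ℝ
  | mk a b ls rs =>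
    (if ls.isEmpty then a else ((ls.attach.map (fun x => (stops x.1).2)).maximum.unbotD 0),
     if rs.isEmpty then b else ((rs.attach.map (fun x => (stops x.1).1)).minimum.untopD 0))
decreasing_by all_goals (simp only [SG.mk.sizeOf_spec]; (first | (have := sizeOf_lt_of_mem x.2) | (have := sizeOf_lt_of_mem (by assumption : x ∈ _))); omega)

noncomputable def Ls (g : SG) : ℝ := g.stops.1
noncomputable def Rs (g : SG) : ℝ := g.stops.2

/-- The conjugate: interchange Left and Right and negate atoms. -/
noncomputable def conj : SG → SG
  | mk a b ls rs =>
    mk (-b) (-a) (rs.attach.map (fun x => conj x.1)) (ls.attach.map (fun x => conj x.1))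
decreasing_by all_goals (simp only [SG.mk.sizeOf_spec]; (first | (have := sizeOf_lt_of_mem x.2) | (have := sizeOf_lt_of_mem (by assumption : x ∈ _))); omega)

/-- The game ⟨∅^s | ∅^s⟩ of a real number `s`. -/
def num (s : ℝ) : SG := mk s s [] []

/-- The zero game ⟨∅^0 | ∅^0⟩. -/
def zero : SG := num 0

/-- Waiting moves: the image of the Normal-play integer `n`. -/
def wait : ℕ → SG
  | 0 => zero
  | n + 1 => mk 0 0 [wait n] []

/-- Birthday: the depth of the game tree. -/
def birthday : SG → ℕ
  | mk _ _ ls rs =>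
    max ((ls.attach.map (fun x => birthday x.1 + 1)).maximum.unbotD 0)
        ((rs.attach.map (fun x => birthday x.1 + 1)).maximum.unbotD 0)
decreasing_by all_goals (simp only [SG.mk.sizeOf_spec]; (first | (have := sizeOf_lt_of_mem x.2) | (have := sizeOf_lt_of_mem (by assumption : x ∈ _))); omega)

/-- `Ge G H` is the order `G ≽ H`. -/
def Ge (G H : SG) : Prop :=
  ∀ X : SG, X.Guaranteed → Ls (G.add X) ≥ Ls (H.add X) ∧ Rs (G.add X) ≥ Rs (H.add X)

/-- Equivalence `G ∼ H`. -/
def Equiv (G H : SG) : Prop := Ge G H ∧ Ge H G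

/-- Right's pass-allowed Left-stop `L̲s(G) = min_n Ls(G - n̂)`. -/
noncomputable def lsU (G : SG) : ℝ := ⨅ n : ℕ, Ls (G.add (wait n).conj)

/-- Left's pass-allowed Right-stop `R̄s(G) = max_n Rs(G + n̂)`. -/
noncomputable def rsO (G : SG) : ℝ := ⨆ n : ℕ, Rs (G.add (wait n))

/-- `L̄s(G) = max_n Ls(G + n̂)`. -/
noncomputable def lsO (G : SG) : ℝ := ⨆ n : ℕ, Ls (G.add (wait n))

/-- `R̲s(G) = min_n Rs(G + n̂)`. -/
noncomputable def rsU (G : SG) : ℝ := ⨅ n : ℕ, Rs (G.add (wait n))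

/-- Identity of games: same tree structure (up to reordering of options),
with identical atoms at atomic positions. -/
def Ident : SG → SG → Prop
  | mk a1 b1 L1 R1, mk a2 b2 L2 R2 =>
    (L1 = [] ↔ L2 = []) ∧ (L1 = [] → a1 = a2) ∧
    (R1 = [] ↔ R2 = []) ∧ (R1 = [] → b1 = b2) ∧
    (∀ x ∈ L1, ∃ y : {z // z ∈ L2}, Ident x y.1) ∧
    (∀ y ∈ L2, ∃ x : {z // z ∈ L1}, Ident x.1 y) ∧
    (∀ x ∈ R1, ∃ y : {z // z ∈ R2}, Ident x y.1) ∧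
    (∀ y ∈ R2, ∃ x : {z // z ∈ R1}, Ident x.1 y)
termination_by g h => sizeOf g
decreasing_by all_goals (simp only [SG.mk.sizeOf_spec]; (first | (have := sizeOf_lt_of_mem x.2) | (have := sizeOf_lt_of_mem (by assumption : x ∈ _))); omega)

/-- `Linked H G`: `H` is linked to `G` (by some guaranteed `T`). -/
def Linked (H G : SG) : Prop :=
  ∃ T : SG, T.Guaranteed ∧ Ls (H.add T) < 0 ∧ 0 < Rs (G.add T)

/-- Replace every atom of `G` by `∅^x`. -/
def subst (v : ℝ) : SG → SG
  | mk _ _ ls rs =>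
    mk v v (ls.attach.map (fun x => subst v x.1)) (rs.attach.map (fun x => subst v x.1))
decreasing_by all_goals (simp only [SG.mk.sizeOf_spec]; (first | (have := sizeOf_lt_of_mem x.2) | (have := sizeOf_lt_of_mem (by assumption : x ∈ _))); omega)

/-- The maximum atom value in `G`. -/
noncomputable def maxAtom (G : SG) : ℝ := G.atomList.maximum.unbotD 0

/-- The minimum atom value in `G`. -/
noncomputable def minAtom (G : SG) : ℝ := G.atomList.minimum.untopD 0


theorem _root_.List.le_maximum_unbotD_of_mem {α : Type*} [LinearOrder α] {l : List α} {a : α}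
    (ha : a ∈ l) (d : α) : a ≤ l.maximum.unbotD d := by
  have hne := List.maximum_eq_bot.not.mpr (List.ne_nil_of_mem ha)
  obtain ⟨m, hm⟩ := WithBot.ne_bot_iff_exists.mp hne
  have := List.le_maximum_of_mem' ha
  rw [← hm] at this ⊢
  exact WithBot.coe_le_coe.mp this

theorem _root_.List.maximum_unbotD_mem {α : Type*} [LinearOrder α] {l : List α} (h : l ≠ [])
    (d : α) : l.maximum.unbotD d ∈ l := by
  obtain ⟨m, hm⟩ := WithBot.ne_bot_iff_exists.mp (List.maximum_eq_bot.not.mpr h)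
  rw [← hm]
  exact List.maximum_mem hm.symm

theorem _root_.List.minimum_untopD_le_of_mem {α : Type*} [LinearOrder α] {l : List α} {a : α}
    (ha : a ∈ l) (d : α) : l.minimum.untopD d ≤ a :=
  List.le_maximum_unbotD_of_mem (α := αᵒᵈ) ha d

theorem _root_.List.minimum_untopD_mem {α : Type*} [LinearOrder α] {l : List α} (h : l ≠ [])
    (d : α) : l.minimum.untopD d ∈ l :=
  List.maximum_unbotD_mem (α := αᵒᵈ) h d

@[elab_as_elim]
theorem induction {motive : SG → Prop}
    (mk : ∀ a b ls rs, (∀ x ∈ ls, motive x) → (∀ x ∈ rs, motive x) → motive (mk a b ls rs)) :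
    ∀ G, motive G
  | .mk a b ls rs => mk a b ls rs (fun x _ => induction mk x) (fun x _ => induction mk x)

theorem add_mk (a₁ b₁ : ℝ) (ls₁ rs₁ : List SG) (a₂ b₂ : ℝ) (ls₂ rs₂ : List SG) :
    (mk a₁ b₁ ls₁ rs₁).add (mk a₂ b₂ ls₂ rs₂) =
      mk (a₁ + a₂) (b₁ + b₂)
        (ls₁.map (·.add (mk a₂ b₂ ls₂ rs₂)) ++ ls₂.map ((mk a₁ b₁ ls₁ rs₁).add ·))
        (rs₁.map (·.add (mk a₂ b₂ ls₂ rs₂)) ++ rs₂.map ((mk a₁ b₁ ls₁ rs₁).add ·)) := by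
  rw [add]
  simp only [List.map_subtype, List.unattach_attach]

theorem conj_mk (a b : ℝ) (ls rs : List SG) :
    conj (mk a b ls rs) = mk (-b) (-a) (rs.map conj) (ls.map conj) := by
  rw [conj]
  simp only [List.map_subtype, List.unattach_attach]

theorem atomList_mk (a b : ℝ) (ls rs : List SG) :
    atomList (mk a b ls rs) =
      (if ls = [] then [a] else (ls.map atomList).flatten)
        ++ (if rs = [] then [b] else (rs.map atomList).flatten) := by
  rw [atomList]
  simp only [List.isEmpty_iff, List.map_subtype, List.unattach_attach]

theorem Ls_eq (U : SG) : Ls U = if U.L = [] then U.la else (U.L.map Rs).maximum.unbotD 0 := by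
  cases U
  rw [Ls, stops]
  simp only [List.isEmpty_iff, List.map_subtype, List.unattach_attach, L, la]
  rfl

theorem Rs_eq (U : SG) : Rs U = if U.R = [] then U.ra else (U.R.map Ls).minimum.untopD 0 := by
  cases U
  rw [Rs, stops]
  simp only [List.isEmpty_iff, List.map_subtype, List.unattach_attach, R, ra]
  rfl

theorem birthday_mk (a b : ℝ) (ls rs : List SG) :
    birthday (mk a b ls rs) =
      max ((ls.map (birthday · + 1)).maximum.unbotD 0)
        ((rs.map (birthday · + 1)).maximum.unbotD 0) := by
  rw [birthday]
  simp only [List.map_subtype, List.unattach_attach]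

theorem Ls_of_L_eq_nil {U : SG} (h : U.L = []) : Ls U = U.la := by
  rw [Ls_eq, if_pos h]

theorem Rs_of_R_eq_nil {U : SG} (h : U.R = []) : Rs U = U.ra := by
  rw [Rs_eq, if_pos h]

theorem Rs_le_Ls_of_mem_L {U x : SG} (hx : x ∈ U.L) : Rs x ≤ Ls U := by
  rw [Ls_eq, if_neg (List.ne_nil_of_mem hx)]
  exact List.le_maximum_unbotD_of_mem (List.mem_map_of_mem hx) 0

theorem Rs_le_Ls_of_mem_R {U x : SG} (hx : x ∈ U.R) : Rs U ≤ Ls x := by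
  rw [Rs_eq, if_neg (List.ne_nil_of_mem hx)]
  exact List.minimum_untopD_le_of_mem (List.mem_map_of_mem hx) 0

theorem exists_mem_L_Rs_eq_Ls {U : SG} (h : U.L ≠ []) : ∃ x ∈ U.L, Rs x = Ls U := by
  rw [Ls_eq, if_neg h]
  exact List.mem_map.mp (List.maximum_unbotD_mem (List.map_eq_nil_iff.not.mpr h) 0)

theorem exists_mem_R_Ls_eq_Rs {U : SG} (h : U.R ≠ []) : ∃ x ∈ U.R, Ls x = Rs U := by
  rw [Rs_eq, if_neg h]
  exact List.mem_map.mp (List.minimum_untopD_mem (List.map_eq_nil_iff.not.mpr h) 0)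

theorem Ls_le_of_forall_mem_L {U : SG} {c : ℝ} (hnil : U.L = [] → U.la ≤ c)
    (h : ∀ x ∈ U.L, Rs x ≤ c) : Ls U ≤ c := by
  by_cases hL : U.L = []
  · rw [Ls_of_L_eq_nil hL]
    exact hnil hL
  · obtain ⟨x, hx, hLs⟩ := exists_mem_L_Rs_eq_Ls hL
    exact hLs ▸ h x hx

theorem le_Rs_of_forall_mem_R {U : SG} {c : ℝ} (hnil : U.R = [] → c ≤ U.ra)
    (h : ∀ x ∈ U.R, c ≤ Ls x) : c ≤ Rs U := by
  by_cases hR : U.R = []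
  · rw [Rs_of_R_eq_nil hR]
    exact hnil hR
  · obtain ⟨x, hx, hRs⟩ := exists_mem_R_Ls_eq_Rs hR
    exact hRs ▸ h x hx

theorem birthday_lt_of_mem_L {U x : SG} (hx : x ∈ U.L) : birthday x < birthday U := by
  cases U
  rw [birthday_mk]
  exact (List.le_maximum_unbotD_of_mem (List.mem_map_of_mem (f := (birthday · + 1)) hx) 0).trans
    (le_max_left _ _)

theorem birthday_lt_of_mem_R {U x : SG} (hx : x ∈ U.R) : birthday x < birthday U := by
  cases U
  rw [birthday_mk]
  exact (List.le_maximum_unbotD_of_mem (List.mem_map_of_mem (f := (birthday · + 1)) hx) 0).trans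
    (le_max_right _ _)

theorem la_add (U V : SG) : (U.add V).la = U.la + V.la := by
  cases U; cases V; rw [add_mk]; rfl

theorem ra_add (U V : SG) : (U.add V).ra = U.ra + V.ra := by
  cases U; cases V; rw [add_mk]; rfl

theorem L_add (U V : SG) : (U.add V).L = U.L.map (·.add V) ++ V.L.map (U.add ·) := by
  cases U; cases V; rw [add_mk]; rfl

theorem R_add (U V : SG) : (U.add V).R = U.R.map (·.add V) ++ V.R.map (U.add ·) := by
  cases U; cases V; rw [add_mk]; rfl

theorem mem_L_add {U V x : SG} :
    x ∈ (U.add V).L ↔ (∃ u ∈ U.L, u.add V = x) ∨ ∃ v ∈ V.L, U.add v = x := by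
  simp only [L_add, List.mem_append, List.mem_map]

theorem mem_R_add {U V x : SG} :
    x ∈ (U.add V).R ↔ (∃ u ∈ U.R, u.add V = x) ∨ ∃ v ∈ V.R, U.add v = x := by
  simp only [R_add, List.mem_append, List.mem_map]

theorem add_mem_L_add_left {U u : SG} (V : SG) (hu : u ∈ U.L) : u.add V ∈ (U.add V).L :=
  mem_L_add.mpr (.inl ⟨u, hu, rfl⟩)

theorem add_mem_L_add_right (U : SG) {V v : SG} (hv : v ∈ V.L) : U.add v ∈ (U.add V).L :=
  mem_L_add.mpr (.inr ⟨v, hv, rfl⟩)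

theorem add_mem_R_add_left {U u : SG} (V : SG) (hu : u ∈ U.R) : u.add V ∈ (U.add V).R :=
  mem_R_add.mpr (.inl ⟨u, hu, rfl⟩)

theorem add_mem_R_add_right (U : SG) {V v : SG} (hv : v ∈ V.R) : U.add v ∈ (U.add V).R :=
  mem_R_add.mpr (.inr ⟨v, hv, rfl⟩)

theorem zero_add (X : SG) : zero.add X = X := by
  induction X using induction with
  | mk a b ls rs ihl ihr =>
    rw [zero, num] at ihl ihr ⊢
    rw [add_mk, List.map_congr_left ihl, List.map_congr_left ihr]
    simp only [List.map_nil, List.nil_append, List.map_id', _root_.zero_add]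

theorem atomList_subset_of_mem_L {U x : SG} (hx : x ∈ U.L) : atomList x ⊆ atomList U := by
  obtain ⟨a, b, ls, rs⟩ := U
  intro s hs
  rw [atomList_mk, if_neg (List.ne_nil_of_mem (l := ls) hx)]
  exact List.mem_append_left _ (List.mem_flatten.mpr ⟨_, List.mem_map_of_mem hx, hs⟩)

theorem atomList_subset_of_mem_R {U x : SG} (hx : x ∈ U.R) : atomList x ⊆ atomList U := by
  obtain ⟨a, b, ls, rs⟩ := U
  intro s hs
  rw [atomList_mk, if_neg (List.ne_nil_of_mem (l := rs) hx)]
  exact List.mem_append_right _ (List.mem_flatten.mpr ⟨_, List.mem_map_of_mem hx, hs⟩)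

theorem la_mem_atomList {U : SG} (h : U.L = []) : U.la ∈ atomList U := by
  obtain ⟨a, b, ls, rs⟩ := U
  rw [atomList_mk, if_pos (show ls = [] from h)]
  exact List.mem_append_left _ (List.mem_singleton_self _)

theorem ra_mem_atomList {U : SG} (h : U.R = []) : U.ra ∈ atomList U := by
  obtain ⟨a, b, ls, rs⟩ := U
  rw [atomList_mk, if_pos (show rs = [] from h)]
  exact List.mem_append_right _ (List.mem_singleton_self _)

theorem stops_mem_atomList (U : SG) : Ls U ∈ atomList U ∧ Rs U ∈ atomList U := by
  induction U using induction with
  | mk a b ls rs ihl ihr =>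
    constructor
    · by_cases h : ls = []
      · exact Ls_of_L_eq_nil (U := mk a b ls rs) h ▸ la_mem_atomList h
      · obtain ⟨x, hx, hLs⟩ := exists_mem_L_Rs_eq_Ls (U := mk a b ls rs) h
        exact hLs ▸ atomList_subset_of_mem_L hx (ihl x hx).2
    · by_cases h : rs = []
      · exact Rs_of_R_eq_nil (U := mk a b ls rs) h ▸ ra_mem_atomList h
      · obtain ⟨x, hx, hRs⟩ := exists_mem_R_Ls_eq_Rs (U := mk a b ls rs) h
        exact hRs ▸ atomList_subset_of_mem_R hx (ihr x hx).1

theorem Guaranteed.of_mem_L {U x : SG} (hU : U.Guaranteed) (hx : x ∈ U.L) : x.Guaranteed := by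
  cases U
  rw [Guaranteed] at hU
  exact hU.1 x hx

theorem Guaranteed.of_mem_R {U x : SG} (hU : U.Guaranteed) (hx : x ∈ U.R) : x.Guaranteed := by
  cases U
  rw [Guaranteed] at hU
  exact hU.2.1 x hx

theorem Guaranteed.Ls_le_Rs_of_L_eq_nil {U : SG} (hU : U.Guaranteed) (h : U.L = []) :
    Ls U ≤ Rs U := by
  cases U
  rw [Guaranteed] at hU
  rw [Ls_of_L_eq_nil h]
  exact hU.2.2.1 h _ (stops_mem_atomList _).2

theorem Guaranteed.Ls_le_Rs_of_R_eq_nil {U : SG} (hU : U.Guaranteed) (h : U.R = []) :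
    Ls U ≤ Rs U := by
  cases U
  rw [Guaranteed] at hU
  rw [Rs_of_R_eq_nil h]
  exact hU.2.2.2 h _ (stops_mem_atomList _).1

theorem guaranteed_of_forall_mem_atomList_eq (c : ℝ) (U : SG) (h : ∀ s ∈ atomList U, s = c) :
    U.Guaranteed := by
  induction U using induction with
  | mk a b ls rs ihl ihr =>
    rw [Guaranteed]
    refine ⟨fun x hx => ihl x hx fun s hs => h s (atomList_subset_of_mem_L hx hs),
      fun x hx => ihr x hx fun s hs => h s (atomList_subset_of_mem_R hx hs),
      fun hL s hs => ?_, fun hR s hs => ?_⟩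
    · rw [h s hs, h a (la_mem_atomList hL)]
    · rw [h s hs, h b (ra_mem_atomList hR)]

theorem conj_zero : conj zero = zero := by
  rw [zero, num, conj_mk, neg_zero, List.map_nil]

theorem conj_wait_succ (n : ℕ) : conj (wait (n + 1)) = mk 0 0 [] [conj (wait n)] := by
  rw [wait, conj_mk, neg_zero, List.map_nil, List.map_singleton]

theorem L_conj_wait (n : ℕ) : (conj (wait n)).L = [] := by
  cases n
  · rw [wait, conj_zero]; rfl
  · rw [conj_wait_succ]; rfl

theorem la_conj_wait (n : ℕ) : (conj (wait n)).la = 0 := by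
  cases n
  · rw [wait, conj_zero]; rfl
  · rw [conj_wait_succ]; rfl

theorem conj_wait_mem_R_conj_wait_succ (n : ℕ) : conj (wait n) ∈ (conj (wait (n + 1))).R := by
  rw [conj_wait_succ]
  exact List.mem_singleton_self _

theorem R_wait (n : ℕ) : (wait n).R = [] := by
  cases n <;> rfl

theorem ra_wait (n : ℕ) : (wait n).ra = 0 := by
  cases n <;> rfl

theorem wait_mem_L_wait_succ (n : ℕ) : wait n ∈ (wait (n + 1)).L :=
  List.mem_singleton_self _

theorem Ls_conj_wait (n : ℕ) : Ls (conj (wait n)) = 0 := by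
  rw [Ls_of_L_eq_nil (L_conj_wait n), la_conj_wait]

theorem Ls_wait (n : ℕ) : Ls (wait n) = 0 := by
  cases n with
  | zero => exact Ls_of_L_eq_nil rfl
  | succ n =>
    obtain ⟨x, hx, hLs⟩ := exists_mem_L_Rs_eq_Ls (U := wait (n + 1)) (List.cons_ne_nil _ _)
    rw [← hLs, List.mem_singleton.mp hx, Rs_of_R_eq_nil (R_wait n), ra_wait]

theorem forall_mem_atomList_wait (n : ℕ) : ∀ s ∈ atomList (wait n), s = 0 := by
  induction n with
  | zero => simp [wait, zero, num, atomList_mk]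
  | succ n ih =>
    intro s hs
    rw [wait, atomList_mk, if_neg (List.cons_ne_nil _ _), if_pos rfl, List.map_singleton,
      List.flatten_singleton, List.mem_append, List.mem_singleton] at hs
    exact hs.elim (ih s) id

theorem forall_mem_atomList_conj_wait (n : ℕ) : ∀ s ∈ atomList (conj (wait n)), s = 0 := by
  induction n with
  | zero =>
    rw [wait, conj_zero]
    exact forall_mem_atomList_wait 0
  | succ n ih =>
    intro s hs
    rw [conj_wait_succ, atomList_mk, if_pos rfl, if_neg (List.cons_ne_nil _ _), List.map_singleton,
      List.flatten_singleton, List.mem_append, List.mem_singleton] at hs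
    exact hs.elim id (ih s)

theorem guaranteed_wait (n : ℕ) : (wait n).Guaranteed :=
  guaranteed_of_forall_mem_atomList_eq 0 _ (forall_mem_atomList_wait n)

theorem guaranteed_conj_wait (n : ℕ) : (conj (wait n)).Guaranteed :=
  guaranteed_of_forall_mem_atomList_eq 0 _ (forall_mem_atomList_conj_wait n)

/- With Right to move, Right may have to pass once more than with Left to move; hence the
strict bound on `n` in the last two lemmas. -/
mutual

theorem Ls_add_add_conj_wait_le {U V : SG} {n : ℕ} (hU : U.Guaranteed) (hV : V.Guaranteed)
    (hn : birthday U + birthday V ≤ n) :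
    Ls ((U.add V).add (conj (wait n))) ≤ Ls U + Ls V := by
  refine Ls_le_of_forall_mem_L (fun hnil => ?_) (fun x hx => ?_)
  · rw [L_add, L_add, L_conj_wait] at hnil
    simp only [List.append_eq_nil_iff, List.map_eq_nil_iff] at hnil
    rw [la_add, la_add, la_conj_wait, add_zero, Ls_of_L_eq_nil hnil.1.1, Ls_of_L_eq_nil hnil.1.2]
  · rw [L_add, L_conj_wait, List.map_nil, List.append_nil, List.mem_map] at hx
    obtain ⟨w, hw, rfl⟩ := hx
    rcases mem_L_add.mp hw with ⟨u, hu, rfl⟩ | ⟨v, hv, rfl⟩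
    · have := birthday_lt_of_mem_L hu
      calc Rs ((u.add V).add (conj (wait n))) ≤ Rs u + Ls V :=
            Rs_add_add_conj_wait_le_Rs_add_Ls (hU.of_mem_L hu) hV (by omega)
        _ ≤ Ls U + Ls V := add_le_add_left (Rs_le_Ls_of_mem_L hu) _
    · have := birthday_lt_of_mem_L hv
      calc Rs ((U.add v).add (conj (wait n))) ≤ Ls U + Rs v :=
            Rs_add_add_conj_wait_le_Ls_add_Rs hU (hV.of_mem_L hv) (by omega)
        _ ≤ Ls U + Ls V := add_le_add_right (Rs_le_Ls_of_mem_L hv) _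
termination_by birthday U + birthday V + n

theorem Rs_add_add_conj_wait_le_Ls_add_Rs {U V : SG} {n : ℕ} (hU : U.Guaranteed)
    (hV : V.Guaranteed) (hn : birthday U + birthday V < n) :
    Rs ((U.add V).add (conj (wait n))) ≤ Ls U + Rs V := by
  by_cases hVR : V.R = []
  · obtain ⟨m, rfl⟩ : ∃ m, n = m + 1 := ⟨n - 1, by omega⟩
    calc Rs ((U.add V).add (conj (wait (m + 1)))) ≤ Ls ((U.add V).add (conj (wait m))) :=
          Rs_le_Ls_of_mem_R (add_mem_R_add_right _ (conj_wait_mem_R_conj_wait_succ m))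
      _ ≤ Ls U + Ls V := Ls_add_add_conj_wait_le hU hV (by omega)
      _ ≤ Ls U + Rs V := add_le_add_right (hV.Ls_le_Rs_of_R_eq_nil hVR) _
  · obtain ⟨v, hv, hRs⟩ := exists_mem_R_Ls_eq_Rs hVR
    have := birthday_lt_of_mem_R hv
    calc Rs ((U.add V).add (conj (wait n))) ≤ Ls ((U.add v).add (conj (wait n))) :=
          Rs_le_Ls_of_mem_R (add_mem_R_add_left _ (add_mem_R_add_right U hv))
      _ ≤ Ls U + Ls v := Ls_add_add_conj_wait_le hU (hV.of_mem_R hv) (by omega)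
      _ = Ls U + Rs V := by rw [hRs]
termination_by birthday U + birthday V + n

theorem Rs_add_add_conj_wait_le_Rs_add_Ls {U V : SG} {n : ℕ} (hU : U.Guaranteed)
    (hV : V.Guaranteed) (hn : birthday U + birthday V < n) :
    Rs ((U.add V).add (conj (wait n))) ≤ Rs U + Ls V := by
  by_cases hUR : U.R = []
  · obtain ⟨m, rfl⟩ : ∃ m, n = m + 1 := ⟨n - 1, by omega⟩
    calc Rs ((U.add V).add (conj (wait (m + 1)))) ≤ Ls ((U.add V).add (conj (wait m))) :=
          Rs_le_Ls_of_mem_R (add_mem_R_add_right _ (conj_wait_mem_R_conj_wait_succ m))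
      _ ≤ Ls U + Ls V := Ls_add_add_conj_wait_le hU hV (by omega)
      _ ≤ Rs U + Ls V := add_le_add_left (hU.Ls_le_Rs_of_R_eq_nil hUR) _
  · obtain ⟨u, hu, hRs⟩ := exists_mem_R_Ls_eq_Rs hUR
    have := birthday_lt_of_mem_R hu
    calc Rs ((U.add V).add (conj (wait n))) ≤ Ls ((u.add V).add (conj (wait n))) :=
          Rs_le_Ls_of_mem_R (add_mem_R_add_left _ (add_mem_R_add_left V hu))
      _ ≤ Ls u + Ls V := Ls_add_add_conj_wait_le (hU.of_mem_R hu) hV (by omega)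
      _ = Rs U + Ls V := by rw [hRs]
termination_by birthday U + birthday V + n

end

mutual

theorem le_Rs_add_add_wait {U V : SG} {n : ℕ} (hU : U.Guaranteed) (hV : V.Guaranteed)
    (hn : birthday U + birthday V ≤ n) :
    Rs U + Rs V ≤ Rs ((U.add V).add (wait n)) := by
  refine le_Rs_of_forall_mem_R (fun hnil => ?_) (fun x hx => ?_)
  · rw [R_add, R_add, R_wait] at hnil
    simp only [List.append_eq_nil_iff, List.map_eq_nil_iff] at hnil
    rw [ra_add, ra_add, ra_wait, add_zero, Rs_of_R_eq_nil hnil.1.1, Rs_of_R_eq_nil hnil.1.2]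
  · rw [R_add, R_wait, List.map_nil, List.append_nil, List.mem_map] at hx
    obtain ⟨w, hw, rfl⟩ := hx
    rcases mem_R_add.mp hw with ⟨u, hu, rfl⟩ | ⟨v, hv, rfl⟩
    · have := birthday_lt_of_mem_R hu
      calc Rs U + Rs V ≤ Ls u + Rs V := add_le_add_left (Rs_le_Ls_of_mem_R hu) _
        _ ≤ Ls ((u.add V).add (wait n)) :=
            Ls_add_Rs_le_Ls_add_add_wait (hU.of_mem_R hu) hV (by omega)
    · have := birthday_lt_of_mem_R hv
      calc Rs U + Rs V ≤ Rs U + Ls v := add_le_add_right (Rs_le_Ls_of_mem_R hv) _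
        _ ≤ Ls ((U.add v).add (wait n)) :=
            Rs_add_Ls_le_Ls_add_add_wait hU (hV.of_mem_R hv) (by omega)
termination_by birthday U + birthday V + n

theorem Rs_add_Ls_le_Ls_add_add_wait {U V : SG} {n : ℕ} (hU : U.Guaranteed)
    (hV : V.Guaranteed) (hn : birthday U + birthday V < n) :
    Rs U + Ls V ≤ Ls ((U.add V).add (wait n)) := by
  by_cases hVL : V.L = []
  · obtain ⟨m, rfl⟩ : ∃ m, n = m + 1 := ⟨n - 1, by omega⟩
    calc Rs U + Ls V ≤ Rs U + Rs V := add_le_add_right (hV.Ls_le_Rs_of_L_eq_nil hVL) _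
      _ ≤ Rs ((U.add V).add (wait m)) := le_Rs_add_add_wait hU hV (by omega)
      _ ≤ Ls ((U.add V).add (wait (m + 1))) :=
          Rs_le_Ls_of_mem_L (add_mem_L_add_right _ (wait_mem_L_wait_succ m))
  · obtain ⟨v, hv, hLs⟩ := exists_mem_L_Rs_eq_Ls hVL
    have := birthday_lt_of_mem_L hv
    calc Rs U + Ls V = Rs U + Rs v := by rw [hLs]
      _ ≤ Rs ((U.add v).add (wait n)) := le_Rs_add_add_wait hU (hV.of_mem_L hv) (by omega)
      _ ≤ Ls ((U.add V).add (wait n)) :=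
          Rs_le_Ls_of_mem_L (add_mem_L_add_left _ (add_mem_L_add_right U hv))
termination_by birthday U + birthday V + n

theorem Ls_add_Rs_le_Ls_add_add_wait {U V : SG} {n : ℕ} (hU : U.Guaranteed)
    (hV : V.Guaranteed) (hn : birthday U + birthday V < n) :
    Ls U + Rs V ≤ Ls ((U.add V).add (wait n)) := by
  by_cases hUL : U.L = []
  · obtain ⟨m, rfl⟩ : ∃ m, n = m + 1 := ⟨n - 1, by omega⟩
    calc Ls U + Rs V ≤ Rs U + Rs V := add_le_add_left (hU.Ls_le_Rs_of_L_eq_nil hUL) _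
      _ ≤ Rs ((U.add V).add (wait m)) := le_Rs_add_add_wait hU hV (by omega)
      _ ≤ Ls ((U.add V).add (wait (m + 1))) :=
          Rs_le_Ls_of_mem_L (add_mem_L_add_right _ (wait_mem_L_wait_succ m))
  · obtain ⟨u, hu, hLs⟩ := exists_mem_L_Rs_eq_Ls hUL
    have := birthday_lt_of_mem_L hu
    calc Ls U + Rs V = Rs u + Rs V := by rw [hLs]
      _ ≤ Rs ((u.add V).add (wait n)) := le_Rs_add_add_wait (hU.of_mem_L hu) hV (by omega)
      _ ≤ Ls ((U.add V).add (wait n)) :=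
          Rs_le_Ls_of_mem_L (add_mem_L_add_left _ (add_mem_L_add_left V hu))
termination_by birthday U + birthday V + n

end

/-- A zugzwang game (`Ls(G) < Rs(G)`) is not invertible. -/
theorem zugzwang_not_invertible (G : SG) (hG : G.Guaranteed)
    (h : G.Ls < G.Rs) :
    ¬ ∃ H : SG, H.Guaranteed ∧ Equiv (G.add H) zero := by
  rintro ⟨H, hH, hGH, hHG⟩
  set n := birthday G + birthday H + 1
  have hRight : 0 ≤ Ls G + Ls H :=
    calc 0 = Ls (zero.add (conj (wait n))) := by rw [zero_add, Ls_conj_wait]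
      _ ≤ Ls ((G.add H).add (conj (wait n))) := (hGH _ (guaranteed_conj_wait n)).1
      _ ≤ Ls G + Ls H := Ls_add_add_conj_wait_le hG hH (by omega)
  have hLeft : Rs G + Ls H ≤ 0 :=
    calc Rs G + Ls H ≤ Ls ((G.add H).add (wait n)) :=
          Rs_add_Ls_le_Ls_add_add_wait hG hH (by omega)
      _ ≤ Ls (zero.add (wait n)) := (hHG _ (guaranteed_wait n)).1
      _ = 0 := by rw [zero_add, Ls_wait]
  linarith

end SG
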